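/- Let π₊ : S³ ∖ H → S¹ be defined by π₊(z₁,z₂) = z₁z₂/|z₁z₂|. Then the map h₊ : S³ ∖ H → S¹ × S¹ × (0,1), h₊(z₁,z₂) = (z₁z₂/|z₁z₂|, z₁/|z₁|, |z₁|), is a homeomorphism satisfying pr₁ ∘ h₊ = π₊ (with pr₁ the projection onto the first factor). In particular π₊ is a trivial fiber bundle projection, and each page π₊⁻¹(u), u ∈ S¹, is homeomorphic to the open annulus S¹ × (0,1). -/

import Mathlib

/-! The map `h₊` is inverted explicitly by `(u, v, r) ↦ (r v, √(1 - r²) u / v)`: the first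
coordinate is forced by `z₁ = |z₁| · z₁/|z₁|`, and the second by `|z₂| = √(1 - |z₁|²)` together
with `z₂/|z₂| = π₊ / (z₁/|z₁|)`. A page `π₊⁻¹(u)` is then the fibre of `pr₁ ∘ h₊` over `u`, which
`h₊` carries onto `{u} × S¹ × (0,1)`. -/

noncomputable section

/-- The unit 3-sphere in ℂ². -/
def S3 : Set (ℂ × ℂ) := {p | ‖p.1‖ ^ 2 + ‖p.2‖ ^ 2 = 1}

/-- The unit circle in ℂ. -/
def S1 : Set ℂ := {w | ‖w‖ = 1}

/-- The Hopf link `H = {(z₁,z₂) ∈ S³ : z₁z₂ = 0}`. -/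
def hopfLink : Set (ℂ × ℂ) := {p ∈ S3 | p.1 * p.2 = 0}

/-- The fibration `π₊(z₁,z₂) = z₁z₂/|z₁z₂|` of the complement of the positive Hopf link. -/
def piPlus (p : ℂ × ℂ) : ℂ := p.1 * p.2 / (‖p.1 * p.2‖ : ℂ)

namespace Homeomorph

variable {X B F : Type*} [TopologicalSpace X] [TopologicalSpace B] [TopologicalSpace F]

def subtypeSubtypeEquivSubtypeInter (s : Set X) (q : X → Prop) :
    {x : s // q x} ≃ₜ {x | x ∈ s ∧ q x} where
  toEquiv := Equiv.subtypeSubtypeEquivSubtypeInter (· ∈ s) q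
  continuous_toFun := (continuous_subtype_val.comp continuous_subtype_val).subtype_mk _
  continuous_invFun := (continuous_subtype_val.subtype_mk _).subtype_mk _

def fstFiberProd (b : B) : {y : B × F // y.1 = b} ≃ₜ F where
  toFun y := y.1.2
  invFun f := ⟨(b, f), rfl⟩
  left_inv := by rintro ⟨⟨b', f⟩, rfl⟩; rfl
  right_inv _ := rfl
  continuous_toFun := continuous_snd.comp continuous_subtype_val
  continuous_invFun := (Continuous.prodMk_right b).subtype_mk _

end Homeomorph

namespace HopfLink

open Complex Set

lemma ne_zero_of_mem_S1 {w : ℂ} (hw : w ∈ S1) : w ≠ 0 :=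
  norm_ne_zero_iff.mp (hw.symm ▸ one_ne_zero)

lemma div_norm_mem_S1 {z : ℂ} (hz : z ≠ 0) : z / (‖z‖ : ℂ) ∈ S1 := by
  simp [S1, hz]

lemma ofReal_norm_mul_div_norm (z : ℂ) : (‖z‖ : ℂ) * (z / ‖z‖) = z := by
  rcases eq_or_ne z 0 with rfl | hz
  · simp
  · exact mul_div_cancel₀ z (by simpa using hz)

lemma mem_S3_diff_hopfLink {p : ℂ × ℂ} :
    p ∈ S3 \ hopfLink ↔ ‖p.1‖ ^ 2 + ‖p.2‖ ^ 2 = 1 ∧ p.1 ≠ 0 ∧ p.2 ≠ 0 := by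
  simp [S3, hopfLink]
  tauto

lemma piPlus_mem_S1 {p : ℂ × ℂ} (hp : p ∈ S3 \ hopfLink) : piPlus p ∈ S1 := by
  obtain ⟨-, h1, h2⟩ := mem_S3_diff_hopfLink.mp hp
  exact div_norm_mem_S1 (mul_ne_zero h1 h2)

lemma norm_fst_mem_Ioo {p : ℂ × ℂ} (hp : p ∈ S3 \ hopfLink) : ‖p.1‖ ∈ Ioo (0 : ℝ) 1 := by
  obtain ⟨hsum, h1, h2⟩ := mem_S3_diff_hopfLink.mp hp
  have h2pos := norm_pos_iff.mpr h2
  exact ⟨norm_pos_iff.mpr h1, by nlinarith [norm_nonneg p.1]⟩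

lemma sqrt_one_sub_norm_fst_sq {p : ℂ × ℂ} (hp : p ∈ S3) : √(1 - ‖p.1‖ ^ 2) = ‖p.2‖ := by
  rw [show 1 - ‖p.1‖ ^ 2 = ‖p.2‖ ^ 2 by linarith [show ‖p.1‖ ^ 2 + ‖p.2‖ ^ 2 = 1 from hp],
    Real.sqrt_sq (norm_nonneg _)]

lemma piPlus_div_div_norm {z w : ℂ} (hz : z ≠ 0) (hw : w ≠ 0) :
    piPlus (z, w) / (z / ‖z‖) = w / ‖w‖ := by
  have hz' : (‖z‖ : ℂ) ≠ 0 := by simpa using hz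
  have hw' : (‖w‖ : ℂ) ≠ 0 := by simpa using hw
  simp only [piPlus, norm_mul, ofReal_mul]
  field_simp

def hopfParam (u v : ℂ) (r : ℝ) : ℂ × ℂ := (r * v, √(1 - r ^ 2) * (u / v))

section hopfParam

variable {u v : ℂ} {r : ℝ}

lemma sqrt_one_sub_sq_pos (hr : r ∈ Ioo (0 : ℝ) 1) : 0 < √(1 - r ^ 2) :=
  Real.sqrt_pos.mpr (by nlinarith [hr.1, hr.2])

lemma norm_hopfParam_fst (hv : v ∈ S1) (hr : r ∈ Ioo (0 : ℝ) 1) :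
    ‖(hopfParam u v r).1‖ = r := by
  simp [hopfParam, show ‖v‖ = 1 from hv, abs_of_pos hr.1]

lemma norm_hopfParam_snd (hu : u ∈ S1) (hv : v ∈ S1) :
    ‖(hopfParam u v r).2‖ = √(1 - r ^ 2) := by
  simp [hopfParam, show ‖u‖ = 1 from hu, show ‖v‖ = 1 from hv]

lemma hopfParam_mem (hu : u ∈ S1) (hv : v ∈ S1) (hr : r ∈ Ioo (0 : ℝ) 1) :
    hopfParam u v r ∈ S3 \ hopfLink := by
  refine mem_S3_diff_hopfLink.mpr ⟨?_, ?_, ?_⟩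
  · rw [norm_hopfParam_fst hv hr, norm_hopfParam_snd hu hv,
      Real.sq_sqrt (by nlinarith [hr.1, hr.2])]
    ring
  · exact norm_ne_zero_iff.mp ((norm_hopfParam_fst hv hr).symm ▸ hr.1.ne')
  · exact norm_ne_zero_iff.mp ((norm_hopfParam_snd hu hv).symm ▸ (sqrt_one_sub_sq_pos hr).ne')

lemma piPlus_hopfParam (hu : u ∈ S1) (hv : v ∈ S1) (hr : r ∈ Ioo (0 : ℝ) 1) :
    piPlus (hopfParam u v r) = u := by
  have hv0 := ne_zero_of_mem_S1 hv
  have hrs : (r : ℂ) * √(1 - r ^ 2) ≠ 0 :=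
    mul_ne_zero (ofReal_ne_zero.mpr hr.1.ne') (ofReal_ne_zero.mpr (sqrt_one_sub_sq_pos hr).ne')
  rw [piPlus, norm_mul, norm_hopfParam_fst hv hr, norm_hopfParam_snd hu hv]
  simp only [hopfParam, ofReal_mul]
  field_simp
  exact mul_div_cancel_left₀ u hrs

lemma hopfParam_fst_div_norm (hv : v ∈ S1) (hr : r ∈ Ioo (0 : ℝ) 1) :
    (hopfParam u v r).1 / ‖(hopfParam u v r).1‖ = v := by
  rw [norm_hopfParam_fst hv hr]
  exact mul_div_cancel_left₀ v (ofReal_ne_zero.mpr hr.1.ne')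

end hopfParam

lemma hopfParam_piPlus {p : ℂ × ℂ} (hp : p ∈ S3 \ hopfLink) :
    hopfParam (piPlus p) (p.1 / ‖p.1‖) ‖p.1‖ = p := by
  obtain ⟨-, h1, h2⟩ := mem_S3_diff_hopfLink.mp hp
  simp only [hopfParam, sqrt_one_sub_norm_fst_sq hp.1, ofReal_norm_mul_div_norm]
  rw [piPlus_div_div_norm h1 h2, ofReal_norm_mul_div_norm]

def hopfCoords : ↥(S3 \ hopfLink) ≃ₜ ↥S1 × ↥S1 × ↥(Ioo (0 : ℝ) 1) where
  toFun p := (⟨piPlus p, piPlus_mem_S1 p.2⟩,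
    ⟨p.1.1 / ‖p.1.1‖, div_norm_mem_S1 (mem_S3_diff_hopfLink.mp p.2).2.1⟩,
    ⟨‖p.1.1‖, norm_fst_mem_Ioo p.2⟩)
  invFun q := ⟨hopfParam q.1 q.2.1 q.2.2, hopfParam_mem q.1.2 q.2.1.2 q.2.2.2⟩
  left_inv p := Subtype.ext (hopfParam_piPlus p.2)
  right_inv q := by
    ext
    · exact piPlus_hopfParam q.1.2 q.2.1.2 q.2.2.2
    · exact hopfParam_fst_div_norm q.2.1.2 q.2.2.2
    · exact norm_hopfParam_fst q.2.1.2 q.2.2.2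
  continuous_toFun := by
    unfold piPlus
    fun_prop (disch := intro p; have := mem_S3_diff_hopfLink.mp p.2; simp_all)
  continuous_invFun := by
    unfold hopfParam
    fun_prop (disch := exact fun q => ne_zero_of_mem_S1 q.2.1.2)

end HopfLink

/-- The map `h₊(z₁,z₂) = (z₁z₂/|z₁z₂|, z₁/|z₁|, |z₁|)` is a homeomorphism from
`S³ ∖ H` to `S¹ × S¹ × (0,1)` whose first component is `π₊`; in particular `π₊` is a
trivial fiber bundle projection and each page `π₊⁻¹(u)` is homeomorphic to the open
annulus `S¹ × (0,1)`. -/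
theorem open_book_positive_hopf_trivial_annulus_bundle :
    (∃ h : (S3 \ hopfLink : Set (ℂ × ℂ)) ≃ₜ (↥S1 × ↥S1 × ↥(Set.Ioo (0:ℝ) 1)),
      ∀ p : (S3 \ hopfLink : Set (ℂ × ℂ)),
        ((h p).1 : ℂ) = piPlus p.val ∧
        ((h p).2.1 : ℂ) = p.val.1 / (‖p.val.1‖ : ℂ) ∧
        ((h p).2.2 : ℝ) = ‖p.val.1‖) ∧
    ∀ u : ℂ, u ∈ S1 →
      Nonempty
        ((({p : ℂ × ℂ | p ∈ S3 \ hopfLink ∧ piPlus p = u}) : Set (ℂ × ℂ)) ≃ₜ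
          (↥S1 × ↥(Set.Ioo (0:ℝ) 1))) := by
  refine ⟨⟨HopfLink.hopfCoords, fun p => ⟨rfl, rfl, rfl⟩⟩, fun u hu => ⟨?_⟩⟩
  have page_eq_fiber : ∀ p, piPlus p.1 = u ↔ (HopfLink.hopfCoords p).1 = ⟨u, hu⟩ :=
    fun p => by rw [Subtype.ext_iff]; rfl
  exact (Homeomorph.subtypeSubtypeEquivSubtypeInter _ _).symm.trans
    ((HopfLink.hopfCoords.subtype page_eq_fiber).trans (Homeomorph.fstFiberProd _))
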